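/- Let D be a real M×M skew-symmetric matrix, Y⁰ ∈ ℝ^M, and r a positive integer with r ≡ 3 (mod 4). Define Y_r(t) = ∑_{j=0}^r (1/j!) Dʲ Y⁰ tʲ for t ∈ [0, τ]. If τ‖D‖ ≤ √2 (operator norm induced by the Euclidean norm), then ‖Y_r(t)‖ ≤ ‖Y⁰‖ for all t ∈ [0, τ]. -/

import Mathlib

open Matrix

/-- The degree-`r` truncation of the exponential series `e^{tD} Y⁰`. -/
noncomputable def truncExp {M : ℕ} (D : Matrix (Fin M) (Fin M) ℝ)
    (Y0 : EuclideanSpace ℝ (Fin M)) (r : ℕ) (t : ℝ) : EuclideanSpace ℝ (Fin M) :=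
  ∑ j ∈ Finset.range (r + 1), (t ^ j / (j.factorial : ℝ)) • WithLp.toLp 2 ((D ^ j).mulVec Y0)

private lemma sum_range_four_mul (f : ℕ → ℝ) (h : ℕ) :
    ∑ j ∈ Finset.range (4*h), f j
      = ∑ i ∈ Finset.range h, (f (4*i) + f (4*i+1) + f (4*i+2) + f (4*i+3)) := by
  induction h with
  | zero => simp
  | succ n ih =>
    have e : 4*(n+1) = (4*n+1+1+1)+1 := by omega
    rw [e, Finset.sum_range_succ, Finset.sum_range_succ, Finset.sum_range_succ,
      Finset.sum_range_succ, ih, Finset.sum_range_succ]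
    ring

set_option maxHeartbeats 1000000 in
theorem strong_stability_r_three_mod_four {M : ℕ} (D : Matrix (Fin M) (Fin M) ℝ)
    (hD : D + D.transpose = 0) (Y0 : EuclideanSpace ℝ (Fin M)) (r : ℕ)
    (hr : 0 < r) (hmod : r % 4 = 3) (τ : ℝ) (hτ : 0 ≤ τ)
    (hCFL : τ * ‖Matrix.toEuclideanCLM (𝕜 := ℝ) D‖ ≤ Real.sqrt 2) :
    ∀ t ∈ Set.Icc (0 : ℝ) τ, ‖truncExp D Y0 r t‖ ≤ ‖Y0‖ := by
  obtain ⟨h0, rfl⟩ : ∃ h0, r = 4*h0 + 3 := ⟨r/4, by omega⟩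
  clear hr hmod
  set R : ℕ := 4*h0 + 3 with hR
  set nD : ℝ := ‖Matrix.toEuclideanCLM (𝕜 := ℝ) D‖ with hnD
  have hnD0 : 0 ≤ nD := norm_nonneg _
  have hDt : D.transpose = -D := eq_neg_of_add_eq_zero_right hD
  set dm : EuclideanSpace ℝ (Fin M) → EuclideanSpace ℝ (Fin M) := fun x => WithLp.toLp 2 (D.mulVec x) with hdm
  -- inner product as dot product
  have hdot : ∀ u v : EuclideanSpace ℝ (Fin M),
      (inner ℝ u v : ℝ) = (u : Fin M → ℝ) ⬝ᵥ (v : Fin M → ℝ) := by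
    intro u v
    simp [PiLp.inner_apply, dotProduct, RCLike.inner_apply, mul_comm]
  have hskew : ∀ x y : EuclideanSpace ℝ (Fin M),
      (inner ℝ (dm x) y : ℝ) = -(inner ℝ x (dm y) : ℝ) := by
    intro x y
    rw [hdot, hdot]
    show D.mulVec x ⬝ᵥ (y : Fin M → ℝ) = -((x : Fin M → ℝ) ⬝ᵥ D.mulVec y)
    rw [Matrix.dotProduct_mulVec x D y, ← Matrix.mulVec_transpose, hDt, Matrix.neg_mulVec,
      neg_dotProduct, neg_neg, dotProduct_comm]
  -- the vectors W j = D^j Y0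
  set W : ℕ → EuclideanSpace ℝ (Fin M) := fun j => WithLp.toLp 2 ((D ^ j).mulVec Y0) with hW
  have hWsucc : ∀ j, W (j+1) = dm (W j) := by
    intro j
    show WithLp.toLp 2 ((D^(j+1)).mulVec Y0) = WithLp.toLp 2 (D.mulVec ((D^j).mulVec Y0))
    rw [pow_succ']
    exact congrArg (WithLp.toLp 2) (Matrix.mulVec_mulVec Y0 D (D^j)).symm
  have hWnorm : ∀ n, ‖W (n+1)‖ ≤ nD * ‖W n‖ := by
    intro n
    rw [hWsucc]
    exact (Matrix.toEuclideanCLM (𝕜 := ℝ) D).le_opNorm (W n)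
  -- the inner products c a b
  set c : ℕ → ℕ → ℝ := fun a b => (inner ℝ (W a) (W b) : ℝ) with hc
  have csymm : ∀ a b, c a b = c b a := fun a b => real_inner_comm _ _
  have cstep : ∀ a b, c (a+1) b = -(c a (b+1)) := by
    intro a b
    show (inner ℝ (W (a+1)) (W b) : ℝ) = -(inner ℝ (W a) (W (b+1)) : ℝ)
    rw [hWsucc a, hWsucc b, hskew]
  have cshift : ∀ a b, c a b = (-1:ℝ)^a * c 0 (a + b) := by
    intro a
    induction a with
    | zero => intro b; simp
    | succ n ih =>
      intro b
      rw [cstep, ih (b+1), pow_succ]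
      have e : n + (b+1) = n + 1 + b := by omega
      rw [e]; ring
  have codd : ∀ q, c 0 (2*q+1) = 0 := by
    intro q
    have h1 := cshift q (q+1)
    have h2 := cshift (q+1) q
    rw [csymm (q+1) q] at h2
    have e1 : q + (q+1) = 2*q+1 := by omega
    have e2 : q + 1 + q = 2*q+1 := by omega
    rw [e1] at h1; rw [e2] at h2
    have h3 : (-1:ℝ)^q * c 0 (2*q+1) = (-1:ℝ)^(q+1) * c 0 (2*q+1) := h1.symm.trans h2
    rcases Nat.even_or_odd q with hq | hq
    · have e3 : (-1:ℝ)^q = 1 := Even.neg_one_pow hq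
      have e4 : (-1:ℝ)^(q+1) = -1 := Odd.neg_one_pow (Even.add_one hq)
      rw [e3, e4] at h3
      linarith
    · have e3 : (-1:ℝ)^q = -1 := Odd.neg_one_pow hq
      have e4 : (-1:ℝ)^(q+1) = 1 := Even.neg_one_pow (Odd.add_one hq)
      rw [e3, e4] at h3
      linarith
  have ceven : ∀ q, c 0 (2*q) = (-1:ℝ)^q * ‖W q‖^2 := by
    intro q
    have h1 := cshift q q
    have e1 : q + q = 2*q := by omega
    rw [e1] at h1
    have hqq : c q q = ‖W q‖^2 := real_inner_self_eq_norm_sq _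
    have hsq : (-1:ℝ)^q * (-1:ℝ)^q = 1 := by
      rw [← pow_add]
      exact Even.neg_one_pow ⟨q, by omega⟩
    calc c 0 (2*q) = ((-1:ℝ)^q * (-1:ℝ)^q) * c 0 (2*q) := by rw [hsq]; ring
      _ = (-1:ℝ)^q * c q q := by rw [mul_assoc, ← h1]
      _ = (-1:ℝ)^q * ‖W q‖^2 := by rw [hqq]
  -- values of c (j+1) R
  have codd' : ∀ m, c (2*m+1+1) R = 0 := by
    intro m
    rw [cshift]
    have e : 2*m+1+1 + R = 2*(m + 2*h0 + 2) + 1 := by omega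
    rw [e, codd, mul_zero]
  have ceven' : ∀ m, c (2*m+1) R = -((-1:ℝ)^m * ‖W (m + 2*h0 + 2)‖^2) := by
    intro m
    rw [cshift]
    have e : 2*m+1 + R = 2*(m + 2*h0 + 2) := by omega
    rw [e, ceven]
    have e1 : (-1:ℝ)^(2*m+1) = -1 := Odd.neg_one_pow ⟨m, by omega⟩
    have e2 : (-1:ℝ)^(m + 2*h0 + 2) = (-1:ℝ)^m := by
      rw [show m + 2*h0 + 2 = m + 2*(h0+1) by omega, pow_add, pow_mul]
      norm_num
    rw [e1, e2]; ring
  -- functions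
  set Z : ℝ → EuclideanSpace ℝ (Fin M) := fun s => truncExp D Y0 R s with hZ
  set X' : ℝ → EuclideanSpace ℝ (Fin M) :=
    fun s => ∑ j ∈ Finset.range R, (s^j / (j.factorial : ℝ)) • W (j+1) with hX'
  set Xp : ℝ → EuclideanSpace ℝ (Fin M) :=
    fun s => ∑ j ∈ Finset.range R, (s^j / (j.factorial : ℝ)) • W j with hXp
  have hZsplit : ∀ s, Z s = Xp s + (s^R / (R.factorial : ℝ)) • W R := by
    intro s
    show ∑ j ∈ Finset.range (R+1), (s ^ j / (j.factorial : ℝ)) • W j = _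
    rw [Finset.sum_range_succ]
  have hderiv : ∀ s : ℝ, HasDerivAt Z (X' s) s := by
    intro s
    have h1 : HasDerivAt (fun u : ℝ => ∑ j ∈ Finset.range (R+1), (u^j / (j.factorial : ℝ)) • W j)
        (∑ j ∈ Finset.range (R+1), (((j:ℝ) * s^(j-1)) / (j.factorial : ℝ)) • W j) s := by
      apply HasDerivAt.fun_sum
      intro j _
      exact ((hasDerivAt_pow j s).div_const (j.factorial : ℝ)).smul_const (W j)
    have h2 : (∑ j ∈ Finset.range (R+1), (((j:ℝ) * s^(j-1)) / (j.factorial : ℝ)) • W j) = X' s := by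
      rw [Finset.sum_range_succ']
      simp only [Nat.cast_zero, zero_mul, zero_div, zero_smul, add_zero]
      apply Finset.sum_congr rfl
      intro i _
      congr 1
      rw [Nat.factorial_succ, show i+1-1 = i from rfl]
      have hi : (i.factorial : ℝ) ≠ 0 := Nat.cast_ne_zero.mpr (Nat.factorial_ne_zero i)
      have hi1 : ((i:ℝ) + 1) ≠ 0 := by positivity
      push_cast
      field_simp
    rw [← h2]
    exact h1
  -- expanding inner products
  have inner_X'_left : ∀ s (Y : EuclideanSpace ℝ (Fin M)),
      (inner ℝ (X' s) Y : ℝ) = ∑ j ∈ Finset.range R, (s^j / (j.factorial : ℝ)) * (inner ℝ (W (j+1)) Y : ℝ) := by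
    intro s Y
    rw [hX']
    rw [sum_inner]
    exact Finset.sum_congr rfl fun j _ => real_inner_smul_left _ _ _
  have inner_Xp_right : ∀ s (Y : EuclideanSpace ℝ (Fin M)),
      (inner ℝ Y (Xp s) : ℝ) = ∑ k ∈ Finset.range R, (s^k / (k.factorial : ℝ)) * (inner ℝ Y (W k) : ℝ) := by
    intro s Y
    rw [hXp]
    rw [inner_sum]
    exact Finset.sum_congr rfl fun k _ => real_inner_smul_right _ _ _
  -- the cross term vanishes
  have hcross : ∀ s : ℝ, (inner ℝ (X' s) (Xp s) : ℝ) = 0 := by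
    intro s
    set T : ℝ := ∑ j ∈ Finset.range R, ∑ k ∈ Finset.range R,
        (s^j / (j.factorial : ℝ)) * ((s^k / (k.factorial : ℝ)) * c (j+1) k) with hT
    have hexp : (inner ℝ (X' s) (Xp s) : ℝ) = T := by
      rw [hT, inner_X'_left]
      apply Finset.sum_congr rfl
      intro j _
      rw [inner_Xp_right, Finset.mul_sum]
    have hTT : T = -T := by
      nth_rewrite 1 [hT]
      rw [Finset.sum_comm]
      have : ∀ k ∈ Finset.range R, (∑ j ∈ Finset.range R,
          (s^j / (j.factorial : ℝ)) * ((s^k / (k.factorial : ℝ)) * c (j+1) k))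
          = ∑ j ∈ Finset.range R,
            -((s^k / (k.factorial : ℝ)) * ((s^j / (j.factorial : ℝ)) * c (k+1) j)) := by
        intro k _
        apply Finset.sum_congr rfl
        intro j _
        have hcc : c (j+1) k = -(c (k+1) j) := by rw [cstep, csymm]
        rw [hcc]; ring
      rw [Finset.sum_congr rfl this]
      simp only [Finset.sum_neg_distrib]
      rfl
    have hT0 : T = 0 := by linarith
    rw [hexp, hT0]
  -- the boundary sum is nonpositive
  have hbound : ∀ s ∈ Set.Icc (0:ℝ) τ,
      (∑ j ∈ Finset.range R, (s^j / (j.factorial : ℝ)) * c (j+1) R) ≤ 0 := by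
    intro s hs
    obtain ⟨hs0, hsτ⟩ := hs
    set f : ℕ → ℝ := fun j => (s^j / (j.factorial : ℝ)) * c (j+1) R with hf
    have hfodd : ∀ m, f (2*m+1) = 0 := by
      intro m
      have e : f (2*m+1) = (s^(2*m+1) / (((2*m+1).factorial) : ℝ)) * c (2*m+1+1) R := rfl
      rw [e, codd' m, mul_zero]
    have hfR : f R = 0 := by
      have e : R = 2*(2*h0+1)+1 := by omega
      rw [e]; exact hfodd _
    have hstep1 : ∑ j ∈ Finset.range (4*(h0+1)), f j = ∑ j ∈ Finset.range R, f j := by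
      have e : 4*(h0+1) = R + 1 := by omega
      rw [e, Finset.sum_range_succ, hfR, add_zero]
    have hgoal : (∑ j ∈ Finset.range R, (s^j / (j.factorial : ℝ)) * c (j+1) R)
        = ∑ j ∈ Finset.range R, f j := rfl
    rw [hgoal, ← hstep1, sum_range_four_mul]
    apply Finset.sum_nonpos
    intro i _
    have h1 : f (4*i+1) = 0 := by rw [show 4*i+1 = 2*(2*i)+1 by omega]; exact hfodd _
    have h3 : f (4*i+3) = 0 := by rw [show 4*i+3 = 2*(2*i+1)+1 by omega]; exact hfodd _
    rw [h1, h3, add_zero, add_zero]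
    set n : ℕ := 2*i + 2*h0 + 2 with hn
    have hf0 : f (4*i) = -((s^(4*i) / (((4*i).factorial) : ℝ)) * ‖W n‖^2) := by
      have e : f (4*i) = (s^(4*i) / (((4*i).factorial) : ℝ)) * c (4*i+1) R := rfl
      rw [e, show 4*i+1 = 2*(2*i)+1 by omega, ceven' (2*i)]
      have e1 : (-1:ℝ)^(2*i) = 1 := Even.neg_one_pow ⟨i, by omega⟩
      rw [e1, show 2*i + 2*h0 + 2 = n by omega]
      ring
    have hf2 : f (4*i+2) = (s^(4*i+2) / (((4*i+2).factorial) : ℝ)) * ‖W (n+1)‖^2 := by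
      have e : f (4*i+2) = (s^(4*i+2) / (((4*i+2).factorial) : ℝ)) * c (4*i+2+1) R := rfl
      rw [e, show 4*i+2+1 = 2*(2*i+1)+1 by omega, ceven' (2*i+1)]
      have e1 : (-1:ℝ)^(2*i+1) = -1 := Odd.neg_one_pow ⟨i, by omega⟩
      rw [e1, show 2*i+1 + 2*h0 + 2 = n+1 by omega]
      ring
    rw [hf0, hf2]
    have hu : (0:ℝ) ≤ ‖W n‖^2 := sq_nonneg _
    have hv2 : ‖W (n+1)‖^2 ≤ nD^2 * ‖W n‖^2 := by
      have h' := hWnorm n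
      calc ‖W (n+1)‖^2 ≤ (nD * ‖W n‖)^2 := by
            apply pow_le_pow_left₀ (norm_nonneg _) h'
        _ = nD^2 * ‖W n‖^2 := by ring
    have ht2 : s^2 * nD^2 ≤ 2 := by
      have h1 : s * nD ≤ Real.sqrt 2 := le_trans (mul_le_mul_of_nonneg_right hsτ hnD0) hCFL
      have h2 : 0 ≤ s * nD := mul_nonneg hs0 hnD0
      have h4 := mul_self_le_mul_self h2 h1
      rw [Real.mul_self_sqrt (by norm_num)] at h4
      nlinarith
    have hkey : s^2 * ‖W (n+1)‖^2 ≤ 2 * ‖W n‖^2 := by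
      calc s^2 * ‖W (n+1)‖^2 ≤ s^2 * (nD^2 * ‖W n‖^2) :=
            mul_le_mul_of_nonneg_left hv2 (sq_nonneg s)
        _ = (s^2 * nD^2) * ‖W n‖^2 := by ring
        _ ≤ 2 * ‖W n‖^2 := mul_le_mul_of_nonneg_right ht2 hu
    have hfact : 2 * (((4*i).factorial) : ℝ) ≤ (((4*i+2).factorial) : ℝ) := by
      have e : (4*i+2).factorial = (4*i+2) * ((4*i+1) * (4*i).factorial) := by
        rw [show 4*i+2 = (4*i+1)+1 by omega, Nat.factorial_succ, Nat.factorial_succ]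
      have hnat : 2 * (4*i).factorial ≤ (4*i+2).factorial := by
        rw [e]
        calc 2 * (4*i).factorial = 2 * (1 * (4*i).factorial) := by ring
          _ ≤ (4*i+2) * ((4*i+1) * (4*i).factorial) :=
            Nat.mul_le_mul (by omega) (Nat.mul_le_mul (by omega) le_rfl)
      exact_mod_cast hnat
    have hfp : (0:ℝ) < (((4*i).factorial) : ℝ) := by exact_mod_cast Nat.factorial_pos _
    have hfp2 : (0:ℝ) < (((4*i+2).factorial) : ℝ) := by exact_mod_cast Nat.factorial_pos _
    have hspow : (0:ℝ) ≤ s^(4*i) := pow_nonneg hs0 _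
    have hmain : (s^(4*i+2) / (((4*i+2).factorial) : ℝ)) * ‖W (n+1)‖^2
        ≤ (s^(4*i) / (((4*i).factorial) : ℝ)) * ‖W n‖^2 := by
      rw [pow_add]
      rw [div_mul_eq_mul_div, div_mul_eq_mul_div, div_le_div_iff₀ hfp2 hfp]
      calc s^(4*i) * s^2 * ‖W (n+1)‖^2 * (((4*i).factorial) : ℝ)
          = (s^2 * ‖W (n+1)‖^2) * (s^(4*i) * (((4*i).factorial) : ℝ)) := by ring
        _ ≤ (2 * ‖W n‖^2) * (s^(4*i) * (((4*i).factorial) : ℝ)) := by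
            apply mul_le_mul_of_nonneg_right hkey
            exact mul_nonneg hspow (le_of_lt hfp)
        _ = (s^(4*i) * ‖W n‖^2) * (2 * (((4*i).factorial) : ℝ)) := by ring
        _ ≤ (s^(4*i) * ‖W n‖^2) * (((4*i+2).factorial) : ℝ) := by
            apply mul_le_mul_of_nonneg_left hfact
            exact mul_nonneg hspow hu
        _ = s^(4*i) * ‖W n‖^2 * (((4*i+2).factorial) : ℝ) := by ring
    linarith
  -- derivative of g
  set g : ℝ → ℝ := fun s => (inner ℝ (Z s) (Z s) : ℝ) with hg
  have hgderiv : ∀ s : ℝ, HasDerivAt g (2 * (inner ℝ (X' s) (Z s) : ℝ)) s := by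
    intro s
    have h1 := (hderiv s).inner ℝ (hderiv s)
    have he : (inner ℝ (Z s) (X' s) : ℝ) + (inner ℝ (X' s) (Z s) : ℝ)
        = 2 * (inner ℝ (X' s) (Z s) : ℝ) := by
      rw [real_inner_comm (Z s) (X' s)]; ring
    rw [he] at h1
    exact h1
  have hgnonpos : ∀ s ∈ Set.Icc (0:ℝ) τ, 2 * (inner ℝ (X' s) (Z s) : ℝ) ≤ 0 := by
    intro s hs
    have hS : (inner ℝ (X' s) (W R) : ℝ)
        = ∑ j ∈ Finset.range R, (s^j / (j.factorial : ℝ)) * c (j+1) R := inner_X'_left s (W R)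
    have hsplit : (inner ℝ (X' s) (Z s) : ℝ)
        = (inner ℝ (X' s) (Xp s) : ℝ)
          + (s^R / (R.factorial : ℝ)) * (inner ℝ (X' s) (W R) : ℝ) := by
      rw [hZsplit s, inner_add_right, real_inner_smul_right]
    have hcoef : (0:ℝ) ≤ s^R / (R.factorial : ℝ) := by
      apply div_nonneg (pow_nonneg hs.1 _)
      exact_mod_cast Nat.zero_le _
    have hterm : (inner ℝ (X' s) (Z s) : ℝ) ≤ 0 := by
      rw [hsplit, hcross s, zero_add, hS]
      exact mul_nonpos_iff.mpr (Or.inl ⟨hcoef, hbound s hs⟩)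
    linarith
  -- conclude by monotonicity
  have hanti : AntitoneOn g (Set.Icc 0 τ) := by
    apply antitoneOn_of_deriv_nonpos (convex_Icc 0 τ)
    · intro x _
      exact (hgderiv x).continuousAt.continuousWithinAt
    · intro x _
      exact (hgderiv x).differentiableAt.differentiableWithinAt
    · intro x hx
      rw [(hgderiv x).deriv]
      rw [interior_Icc] at hx
      exact hgnonpos x ⟨le_of_lt hx.1, le_of_lt hx.2⟩
  intro t ht
  have hZ0 : Z 0 = Y0 := by
    show ∑ j ∈ Finset.range (R+1), ((0:ℝ) ^ j / (j.factorial : ℝ)) • W j = Y0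
    rw [Finset.sum_range_succ']
    have h1 : ∀ i ∈ Finset.range R,
        ((0:ℝ)^(i+1) / (((i+1).factorial) : ℝ)) • W (i+1) = (0 : EuclideanSpace ℝ (Fin M)) := by
      intro i _
      rw [zero_pow (Nat.succ_ne_zero i), zero_div, zero_smul]
    rw [Finset.sum_congr rfl h1, Finset.sum_const_zero, zero_add]
    simp only [pow_zero, Nat.factorial_zero, Nat.cast_one, div_one, one_smul]
    show WithLp.toLp 2 ((D^0).mulVec Y0) = Y0
    rw [pow_zero]
    exact congrArg (WithLp.toLp 2) (Matrix.one_mulVec Y0)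
  have hg0 : g 0 = ‖Y0‖^2 := by
    rw [hg]
    simp only []
    rw [hZ0]
    exact real_inner_self_eq_norm_sq Y0
  have hgt : g t = ‖Z t‖^2 := real_inner_self_eq_norm_sq _
  have hle : g t ≤ g 0 := hanti (Set.left_mem_Icc.mpr hτ) ht ht.1
  have h2 : ‖Z t‖^2 ≤ ‖Y0‖^2 := by rw [← hgt, ← hg0]; exact hle
  have h3 : ‖Z t‖ ≤ ‖Y0‖ := by
    have h4 := Real.sqrt_le_sqrt h2
    rwa [Real.sqrt_sq (norm_nonneg _), Real.sqrt_sq (norm_nonneg _)] at h4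
  exact h3
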